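/- For n ≥ 2, two elements (a, u) and (b, v) of J_n lie in the same orbit under the automorphism group of J_n if and only if a = b and ‖u‖ = ‖v‖. -/

import Mathlib

/-- The spin factor Jordan algebra product on `ℝ × ℝ^d` (here `J_n` with `d = n - 1`). -/
noncomputable def Jmul (d : ℕ) (x y : ℝ × EuclideanSpace ℝ (Fin d)) :
    ℝ × EuclideanSpace ℝ (Fin d) :=
  (x.1 * y.1 + (inner ℝ x.2 y.2 : ℝ), x.1 • y.2 + y.1 • x.2)

/-- An algebra automorphism of `J_n`: a linear bijection preserving the product. -/
def IsJAut (d : ℕ) (Φ : ℝ × EuclideanSpace ℝ (Fin d) → ℝ × EuclideanSpace ℝ (Fin d)) : Prop :=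
  Function.Bijective Φ ∧ IsLinearMap ℝ Φ ∧ ∀ x y, Φ (Jmul d x y) = Jmul d (Φ x) (Φ y)

/-!
An automorphism fixes the unit `(1, 0)`, hence by linearity every scalar `(a, 0)`. The image
`(c, w)` of a pure vector `(0, u)` squares to `‖u‖² (1, 0)`, i.e. `c² + ‖w‖² = ‖u‖²` and
`2c w = 0`; `c ≠ 0` would force `w = 0` and make `(0, u)` and `(c, 0)` collide, so `c = 0` and
`‖w‖ = ‖u‖`. Thus automorphisms preserve `a` and `‖u‖`. Conversely, every linear isometry of
`ℝ^d` acting on the vector part is an automorphism, and the reflection in `(u - v)ᗮ` maps `u`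
to `v` when `‖u‖ = ‖v‖`.
-/

section

variable {d : ℕ}

theorem Jmul_one_left (x : ℝ × EuclideanSpace ℝ (Fin d)) : Jmul d (1, 0) x = x := by
  simp [Jmul]

theorem Jmul_one_right (x : ℝ × EuclideanSpace ℝ (Fin d)) : Jmul d x (1, 0) = x := by
  simp [Jmul]

theorem Jmul_self (c : ℝ) (w : EuclideanSpace ℝ (Fin d)) :
    Jmul d (c, w) (c, w) = (c * c + ‖w‖ ^ 2, (2 * c) • w) := by
  simp only [Jmul, real_inner_self_eq_norm_sq, two_mul, add_smul]

namespace IsJAut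

variable {Φ : ℝ × EuclideanSpace ℝ (Fin d) → ℝ × EuclideanSpace ℝ (Fin d)} (hΦ : IsJAut d Φ)
include hΦ

theorem map_one : Φ (1, 0) = (1, 0) := by
  obtain ⟨x, hx⟩ := hΦ.1.2 (1, 0)
  calc Φ (1, 0) = Jmul d (Φ (1, 0)) (Φ x) := by rw [hx, Jmul_one_right]
    _ = (1, 0) := by rw [← hΦ.2.2, Jmul_one_left, hx]

theorem map_scalar (a : ℝ) : Φ (a, 0) = (a, 0) := by
  have h : ((a, 0) : ℝ × EuclideanSpace ℝ (Fin d)) = a • (1, 0) := by simp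
  rw [h, hΦ.2.1.map_smul, hΦ.map_one]

theorem map_vec_mul_self (u : EuclideanSpace ℝ (Fin d)) :
    Jmul d (Φ (0, u)) (Φ (0, u)) = (‖u‖ ^ 2, 0) := by
  rw [← hΦ.2.2, Jmul_self]
  simp only [mul_zero, zero_smul, zero_add, hΦ.map_scalar]

theorem fst_map_vec (u : EuclideanSpace ℝ (Fin d)) : (Φ (0, u)).1 = 0 := by
  rcases hx : Φ (0, u) with ⟨c, w⟩
  have hsq := hΦ.map_vec_mul_self u
  rw [hx, Jmul_self, Prod.mk.injEq, smul_eq_zero, mul_eq_zero] at hsq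
  by_contra hc
  have hw : w = 0 := hsq.2.resolve_left (by simpa using hc)
  have hcol : Φ (0, u) = Φ (c, 0) := by rw [hx, hw, hΦ.map_scalar]
  exact hc (congrArg Prod.fst (hΦ.1.1 hcol)).symm

theorem norm_snd_map_vec (u : EuclideanSpace ℝ (Fin d)) : ‖(Φ (0, u)).2‖ = ‖u‖ := by
  have hsq := congrArg Prod.fst (hΦ.map_vec_mul_self u)
  rw [Jmul_self, hΦ.fst_map_vec, mul_zero, zero_add] at hsq
  exact (sq_eq_sq₀ (norm_nonneg _) (norm_nonneg _)).1 hsq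

theorem map_mk (a : ℝ) (u : EuclideanSpace ℝ (Fin d)) : Φ (a, u) = (a, (Φ (0, u)).2) := by
  calc Φ (a, u) = Φ (a, 0) + Φ (0, u) := by
        rw [← hΦ.2.1.map_add, Prod.mk_add_mk, add_zero, zero_add]
    _ = (a, (Φ (0, u)).2) := by
        rw [hΦ.map_scalar]
        exact Prod.ext (by simp [hΦ.fst_map_vec]) (zero_add _)

end IsJAut

theorem isJAut_prodMap_id (R : EuclideanSpace ℝ (Fin d) ≃ₗᵢ[ℝ] EuclideanSpace ℝ (Fin d)) :
    IsJAut d (Prod.map id R) := by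
  refine ⟨Function.bijective_id.prodMap R.bijective,
    (LinearMap.id.prodMap R.toLinearEquiv.toLinearMap).isLinear, fun x y => ?_⟩
  simp [Jmul, LinearIsometryEquiv.inner_map_map]

end

theorem stmt_8_general (d : ℕ) (a b : ℝ) (u v : EuclideanSpace ℝ (Fin d)) :
    (∃ Φ : ℝ × EuclideanSpace ℝ (Fin d) → ℝ × EuclideanSpace ℝ (Fin d),
      IsJAut d Φ ∧ Φ (a, u) = (b, v)) ↔ (a = b ∧ ‖u‖ = ‖v‖) := by
  constructor
  · rintro ⟨Φ, hΦ, hab⟩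
    rw [hΦ.map_mk] at hab
    obtain ⟨rfl, rfl⟩ := Prod.mk.inj hab
    exact ⟨rfl, (hΦ.norm_snd_map_vec u).symm⟩
  · rintro ⟨rfl, huv⟩
    exact ⟨Prod.map id (Submodule.reflection (ℝ ∙ (u - v))ᗮ), isJAut_prodMap_id _,
      Prod.ext rfl (Submodule.reflection_sub huv)⟩

theorem stmt_8 (d : ℕ) (hd : 1 ≤ d) (a b : ℝ) (u v : EuclideanSpace ℝ (Fin d)) :
    (∃ Φ : ℝ × EuclideanSpace ℝ (Fin d) → ℝ × EuclideanSpace ℝ (Fin d),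
      IsJAut d Φ ∧ Φ (a, u) = (b, v)) ↔ (a = b ∧ ‖u‖ = ‖v‖) :=
  stmt_8_general d a b u v
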